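/- Let u, v, w ∈ Σ⁺ be words over the queue alphabet such that π̄(u) = ε (u is write-only), vw ≡ wv in the queue monoid, and v ≠ w. Then there exist vectors (x_u, x_v, x_w) and (y_u, y_v, y_w) in ℕ³ with x_v + x_w ≠ 0 such that u^{x_u} v^{x_v} u w^{x_w} ≡ u^{y_u} w^{y_w} u v^{y_v} in the queue monoid. -/

import Mathlib

/-! Once the queue holds at least as many letters as a word `s` reads, `s` acts through its
projections alone: it fails unless `π̄ s` is a prefix of the queue, and otherwise removes that
prefix and appends `π s`. A long enough power of the write-only word `u` puts every queue into
this regime. Applied to `vw ≡ wv` on the queue `π̄(vw)`, this shows that the projections of `v`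
and `w` commute in the free monoid, so `π(v)^a = π(w)^b` for some `a + b > 0`; then
`v^a u w^b` and `w^b u v^a` have the same projections, whence `u^N v^a u w^b ≡ u^N w^b u v^a`. -/

/-- One-step action of a queue symbol (`Sum.inl a` = write `a`, `Sum.inr a` = read `a`)
on a queue state (`none` = error state ⊥). -/
def qstep (A : Type) [DecidableEq A] : Option (List A) → A ⊕ A → Option (List A)
  | none, _ => none
  | some q, Sum.inl a => some (q ++ [a])
  | some q, Sum.inr a =>
      match q with
      | [] => none
      | b :: q' => if b = a then some q' else none

/-- Action of a word of queue operations on a queue state. -/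
def qact (A : Type) [DecidableEq A] (q : Option (List A)) (u : List (A ⊕ A)) :
    Option (List A) :=
  u.foldl (qstep A) q

/-- Equivalence of action sequences: same effect on every queue state. -/
def QEquiv (A : Type) [DecidableEq A] (u v : List (A ⊕ A)) : Prop :=
  ∀ q : Option (List A), qact A q u = qact A q v

/-- The sequence of write actions of a word. -/
def wr {A : Type} (u : List A) : List (A ⊕ A) := u.map Sum.inl

/-- The sequence of read actions of a word. -/
def rd {A : Type} (u : List A) : List (A ⊕ A) := u.map Sum.inr

/-- Positive projection: erase all read actions. -/
def ppr {A : Type} (u : List (A ⊕ A)) : List A :=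
  u.filterMap (Sum.elim some fun _ => none)

/-- Negative projection: erase all write actions (mapping ā to a). -/
def npr {A : Type} (u : List (A ⊕ A)) : List A :=
  u.filterMap (Sum.elim (fun _ => none) some)

/-- `wpow p n` is the `n`-th power `pⁿ` of the word `p`. -/
def wpow {A : Type} (p : List A) (n : ℕ) : List A := (List.replicate n p).flatten

section Words

variable {α : Type}

lemma wpow_succ (p : List α) (n : ℕ) : wpow p (n + 1) = p ++ wpow p n := by
  simp [wpow, List.replicate_succ]

lemma length_wpow (p : List α) (n : ℕ) : (wpow p n).length = n * p.length := by
  induction n with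
  | zero => simp [wpow]
  | succ n ih => rw [wpow_succ, List.length_append, ih]; ring

lemma wpow_nil (n : ℕ) : wpow ([] : List α) n = [] := by
  simp [wpow]

lemma append_wpow_comm {x y : List α} (h : x ++ y = y ++ x) (n : ℕ) :
    x ++ wpow y n = wpow y n ++ x := by
  induction n with
  | zero => simp [wpow]
  | succ n ih => rw [wpow_succ, ← List.append_assoc, h, List.append_assoc, ih,
      List.append_assoc]

lemma wpow_append_wpow_comm {x y : List α} (h : x ++ y = y ++ x) (m n : ℕ) :
    wpow x m ++ wpow y n = wpow y n ++ wpow x m :=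
  (append_wpow_comm (append_wpow_comm h n).symm m).symm

lemma wpow_length_eq_wpow_length {x y : List α} (h : x ++ y = y ++ x) :
    wpow x y.length = wpow y x.length :=
  (List.append_inj (wpow_append_wpow_comm h y.length x.length)
    (by rw [length_wpow, length_wpow, mul_comm])).1

lemma exists_wpow_eq_wpow {x y : List α} (h : x ++ y = y ++ x) :
    ∃ a b : ℕ, a + b ≠ 0 ∧ wpow x a = wpow y b := by
  obtain rfl | hx := eq_or_ne x []
  · exact ⟨1, 0, one_ne_zero, wpow_nil 1⟩
  · exact ⟨y.length, x.length, by simp [hx], wpow_length_eq_wpow_length h⟩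

@[simp] lemma npr_nil : npr ([] : List (α ⊕ α)) = [] := rfl

@[simp] lemma ppr_nil : ppr ([] : List (α ⊕ α)) = [] := rfl

@[simp] lemma npr_cons_inl (a : α) (s : List (α ⊕ α)) : npr (.inl a :: s) = npr s := rfl

@[simp] lemma npr_cons_inr (a : α) (s : List (α ⊕ α)) : npr (.inr a :: s) = a :: npr s := rfl

@[simp] lemma ppr_cons_inl (a : α) (s : List (α ⊕ α)) : ppr (.inl a :: s) = a :: ppr s := rfl

@[simp] lemma ppr_cons_inr (a : α) (s : List (α ⊕ α)) : ppr (.inr a :: s) = ppr s := rfl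

lemma npr_append (s t : List (α ⊕ α)) : npr (s ++ t) = npr s ++ npr t :=
  List.filterMap_append

lemma ppr_append (s t : List (α ⊕ α)) : ppr (s ++ t) = ppr s ++ ppr t :=
  List.filterMap_append

lemma npr_wpow (s : List (α ⊕ α)) (n : ℕ) : npr (wpow s n) = wpow (npr s) n := by
  simp [npr, wpow, List.filterMap_flatten, List.map_replicate]

lemma ppr_wpow (s : List (α ⊕ α)) (n : ℕ) : ppr (wpow s n) = wpow (ppr s) n := by
  simp [ppr, wpow, List.filterMap_flatten, List.map_replicate]

lemma length_ppr_add_length_npr (s : List (α ⊕ α)) :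
    (ppr s).length + (npr s).length = s.length := by
  induction s with
  | nil => rfl
  | cons x s ih =>
    cases x <;> simp only [ppr_cons_inl, ppr_cons_inr, npr_cons_inl, npr_cons_inr,
      List.length_cons] <;> omega

end Words

section Queues

variable {A : Type} [DecidableEq A]

lemma qact_append (q : Option (List A)) (s t : List (A ⊕ A)) :
    qact A q (s ++ t) = qact A (qact A q s) t :=
  List.foldl_append

lemma qact_none (s : List (A ⊕ A)) : qact A none s = none := by
  induction s with
  | nil => rfl
  | cons x s ih => exact ih

lemma qact_npr_append (s : List (A ⊕ A)) (q : List A) :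
    qact A (some (npr s ++ q)) s = some (q ++ ppr s) := by
  induction s generalizing q with
  | nil => simp [qact]
  | cons x s ih =>
    cases x with
    | inl a =>
      show qact A (some (npr s ++ q ++ [a])) s = _
      rw [List.append_assoc, ih]
      simp
    | inr b =>
      show qact A (if b = b then some (npr s ++ q) else none) s = _
      rw [if_pos rfl, ih]
      simp

lemma qact_eq_none_of_not_prefix (s : List (A ⊕ A)) (q : List A)
    (hlen : (npr s).length ≤ q.length) (hpre : ¬ npr s <+: q) :
    qact A (some q) s = none := by
  induction s generalizing q with
  | nil => exact absurd List.nil_prefix hpre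
  | cons x s ih =>
    cases x with
    | inl a =>
      simp only [npr_cons_inl] at hlen hpre
      refine ih (q ++ [a]) (by simp; omega) fun h => hpre ?_
      exact List.prefix_of_prefix_length_le h (List.prefix_append q [a]) hlen
    | inr b =>
      simp only [npr_cons_inr] at hlen hpre
      obtain _ | ⟨c, q⟩ := q
      · exact qact_none s
      show qact A (if c = b then some q else none) s = none
      split_ifs with hcb
      · subst hcb
        exact ih q (by simpa using hlen) fun h => hpre (List.cons_prefix_cons.mpr ⟨rfl, h⟩)
      · exact qact_none s

lemma qact_eq_of_npr_eq_of_ppr_eq {s t : List (A ⊕ A)} (hn : npr s = npr t)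
    (hp : ppr s = ppr t) {q : List A} (hlen : (npr s).length ≤ q.length) :
    qact A (some q) s = qact A (some q) t := by
  by_cases hpre : npr s <+: q
  · obtain ⟨r, rfl⟩ := hpre
    rw [qact_npr_append, hn, qact_npr_append, hp]
  · rw [qact_eq_none_of_not_prefix s q hlen hpre,
      qact_eq_none_of_not_prefix t q (hn ▸ hlen) (hn ▸ hpre)]

lemma QEquiv.npr_eq_and_ppr_eq {s t : List (A ⊕ A)} (h : QEquiv A s t)
    (hlen : (npr s).length = (npr t).length) : npr s = npr t ∧ ppr s = ppr t := by
  have hs := qact_npr_append s []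
  by_cases hpre : npr t <+: npr s
  · have hnt : npr s = npr t := (hpre.eq_of_length hlen.symm).symm
    refine ⟨hnt, ?_⟩
    have ht := qact_npr_append t []
    rw [← hnt, ← h, hs] at ht
    simpa using ht
  · rw [h, List.append_nil, qact_eq_none_of_not_prefix t _ hlen.ge hpre] at hs
    exact absurd hs (Option.some_ne_none _).symm

lemma QEquiv.append_of_npr_eq_of_ppr_eq {p s t : List (A ⊕ A)} (hwp : npr p = [])
    (hlen : (npr s).length ≤ p.length) (hn : npr s = npr t) (hp : ppr s = ppr t) :
    QEquiv A (p ++ s) (p ++ t) := by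
  rintro (_ | q)
  · simp only [qact_append, qact_none]
  · have hpq := qact_npr_append p q
    rw [hwp, List.nil_append] at hpq
    have hlenp := length_ppr_add_length_npr p
    rw [hwp, List.length_nil, add_zero] at hlenp
    rw [qact_append, qact_append, hpq]
    exact qact_eq_of_npr_eq_of_ppr_eq hn hp (by simp only [List.length_append]; omega)

end Queues

theorem stmt11_general (A : Type) [DecidableEq A] (u v w : List (A ⊕ A))
    (hu : u ≠ [])
    (hwr : npr u = [])
    (hcomm : QEquiv A (v ++ w) (w ++ v)) :
    ∃ xu xv xw yu yv yw : ℕ, xv + xw ≠ 0 ∧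
      QEquiv A (wpow u xu ++ wpow v xv ++ u ++ wpow w xw)
        (wpow u yu ++ wpow w yw ++ u ++ wpow v yv) := by
  obtain ⟨hn, hp⟩ := hcomm.npr_eq_and_ppr_eq (by simp only [npr_append, List.length_append]; omega)
  rw [npr_append, npr_append] at hn
  rw [ppr_append, ppr_append] at hp
  obtain ⟨a, b, hab, hpow⟩ := exists_wpow_eq_wpow hp
  set N := (npr (wpow v a ++ (u ++ wpow w b))).length
  refine ⟨N, a, b, N, a, b, hab, ?_⟩
  simp only [List.append_assoc]
  refine QEquiv.append_of_npr_eq_of_ppr_eq (by rw [npr_wpow, hwr, wpow_nil]) ?_ ?_ ?_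
  · rw [length_wpow]
    exact Nat.le_mul_of_pos_right N (List.length_pos_iff.mpr hu)
  · simp only [npr_append, npr_wpow, hwr, List.nil_append]
    exact wpow_append_wpow_comm hn a b
  · simp only [ppr_append, ppr_wpow, hpow]

/-- For a write-only word `u` and commuting words `v ≠ w`, there is a nontrivial
relation `u^{x_u} v^{x_v} u w^{x_w} ≡ u^{y_u} w^{y_w} u v^{y_v}`. -/
theorem stmt11 (A : Type) [DecidableEq A] (u v w : List (A ⊕ A))
    (hu : u ≠ []) (hv : v ≠ []) (hw : w ≠ [])
    (hwr : npr u = [])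
    (hcomm : QEquiv A (v ++ w) (w ++ v)) (hne : v ≠ w) :
    ∃ xu xv xw yu yv yw : ℕ, xv + xw ≠ 0 ∧
      QEquiv A (wpow u xu ++ wpow v xv ++ u ++ wpow w xw)
        (wpow u yu ++ wpow w yw ++ u ++ wpow v yv) :=
  stmt11_general A u v w hu hwr hcomm
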